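/- arXiv:2502.12499 — 7 statements merged into one kernel-verified Lean document; each statement's English description precedes it below -/
import Mathlib

section
/- Let n ≥ 2 and let d_1, …, d_n be positive real numbers. For indices 0 ≤ i < j ≤ n define s(i,j) = Σ_{k=i+1}^{j-1} d_k + max_{i ≤ k ≤ j-1} d_k. Define M(n) = d_n and, recursively for 1 ≤ i < n, M(i) = min_{i < j ≤ n} max( d_i + M(j), d_i + s(i,j) + d_j ). Then M(1) equals the minimum, over all checkpoint sets C ⊆ {1,…,n} with 1 ∈ C and n ∈ C, of the peak memory peak(C) = max_{i ∈ C, i > 1} m_C(i), where for i ∈ C with i > 1 and previous checkpoint h = max{c ∈ C : c < i}, m_C(i) = Σ_{c ∈ C, c ≤ i} d_c + Σ_{k=h+1}^{i-1} d_k + max_{h ≤ k ≤ i-1} d_k. -/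
/-- `segSum d i j = Σ_{k=i+1}^{j-1} d_k`. -/
noncomputable def segSum (d : ℕ → ℝ) (i j : ℕ) : ℝ := ∑ k ∈ Finset.Ioo i j, d k

/-- `segMax d i j = max_{i ≤ k ≤ j-1} d_k` (junk value `0` when `j ≤ i`). -/
noncomputable def segMax (d : ℕ → ℝ) (i j : ℕ) : ℝ :=
  if h : i < j then (Finset.Ico i j).sup' (Finset.nonempty_Ico.mpr h) d else 0

/-- `s(i,j) = Σ_{k=i+1}^{j-1} d_k + max_{i ≤ k ≤ j-1} d_k`. -/
noncomputable def sfun (d : ℕ → ℝ) (i j : ℕ) : ℝ := segSum d i j + segMax d i j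

/-- The previous checkpoint `h = max {c ∈ C : c < i}`. -/
noncomputable def prevCkpt (C : Finset ℕ) (i : ℕ) : ℕ :=
  sSup {c : ℕ | c ∈ C ∧ c < i}

/-- The backward memory usage at a checkpoint `i ∈ C` with previous checkpoint
`h`: `m_C(i) = Σ_{c ∈ C, c ≤ i} d_c + Σ_{k=h+1}^{i-1} d_k + max_{h ≤ k ≤ i-1} d_k`. -/
noncomputable def mUsage (d : ℕ → ℝ) (C : Finset ℕ) (i : ℕ) : ℝ :=
  (∑ c ∈ C.filter (· ≤ i), d c) + segSum d (prevCkpt C i) i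
    + segMax d (prevCkpt C i) i

/-- The peak memory of a checkpoint set: `peak(C) = max_{i ∈ C, i > 1} m_C(i)`. -/
noncomputable def peak (d : ℕ → ℝ) (C : Finset ℕ) : ℝ :=
  sSup {y : ℝ | ∃ i ∈ C, 1 < i ∧ y = mUsage d C i}

/-!
If `j` is the checkpoint following `i` in `C`, the usage at `j` is
`Σ_{c ∈ C, c < i} d_c + d_i + s(i,j) + d_j`, and every later usage exceeds the corresponding
usage of the suffix of `C` starting at `j` by exactly `d_i`. So the recursion for `M` tracks the
peak of a suffix: downward induction over the checkpoints gives
`M(i) + Σ_{c ∈ C, c < i} d_c ≤ peak(C)`, and choosing a minimizing `j` at every step builds a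
checkpoint set all of whose usages are at most `M(1)`.
-/

lemma le_segMax {d : ℕ → ℝ} {i j k : ℕ} (hik : i ≤ k) (hkj : k < j) : d k ≤ segMax d i j := by
  rw [segMax, dif_pos (hik.trans_lt hkj)]
  exact Finset.le_sup' d (Finset.mem_Ico.mpr ⟨hik, hkj⟩)

lemma sfun_nonneg {d : ℕ → ℝ} {i j : ℕ} (hij : i < j) (hd : ∀ k, i ≤ k → k < j → 0 ≤ d k) :
    0 ≤ sfun d i j := by
  have hsum : 0 ≤ segSum d i j := Finset.sum_nonneg fun k hk ↦
    hd k (Finset.mem_Ioo.mp hk).1.le (Finset.mem_Ioo.mp hk).2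
  have hmax : d i ≤ segMax d i j := le_segMax le_rfl hij
  rw [sfun]
  linarith [hd i le_rfl hij]

lemma sInf_Ioc_image_le {f : ℕ → ℝ} {i j n : ℕ} (hij : i < j) (hjn : j ≤ n) :
    sInf {x : ℝ | ∃ j, i < j ∧ j ≤ n ∧ x = f j} ≤ f j := by
  refine csInf_le ((Set.finite_Ioc i n).image f |>.subset ?_).bddBelow ⟨j, hij, hjn, rfl⟩
  rintro _ ⟨k, hik, hkn, rfl⟩
  exact ⟨k, ⟨hik, hkn⟩, rfl⟩

lemma exists_sInf_Ioc_image_eq {f : ℕ → ℝ} {i n : ℕ} (hin : i < n) :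
    ∃ j, i < j ∧ j ≤ n ∧ sInf {x : ℝ | ∃ j, i < j ∧ j ≤ n ∧ x = f j} = f j := by
  have hS : {x : ℝ | ∃ j, i < j ∧ j ≤ n ∧ x = f j} = f '' Set.Ioc i n := by
    ext x
    simp only [Set.mem_image, Set.mem_Ioc]
    grind
  have hmem := Set.Nonempty.csInf_mem ((Set.nonempty_Ioc.mpr hin).image f)
    ((Set.finite_Ioc i n).image f)
  rwa [← hS] at hmem

lemma prevCkpt_eq {C : Finset ℕ} {i j : ℕ} (hi : i ∈ C) (hij : i < j)
    (hgap : ∀ c ∈ C, c < j → c ≤ i) : prevCkpt C j = i :=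
  IsGreatest.csSup_eq ⟨⟨hi, hij⟩, fun c hc ↦ hgap c hc.1 hc.2⟩

lemma prevCkpt_mem_lt {C : Finset ℕ} {c j : ℕ} (hc : c ∈ C) (hcj : c < j) :
    prevCkpt C j ∈ C ∧ prevCkpt C j < j :=
  Nat.sSup_mem (s := {c | c ∈ C ∧ c < j}) ⟨c, hc, hcj⟩ ⟨j, fun _ h ↦ h.2.le⟩

lemma le_prevCkpt {C : Finset ℕ} {c j : ℕ} (hc : c ∈ C) (hcj : c < j) : c ≤ prevCkpt C j :=
  le_csSup ⟨j, fun _ h ↦ h.2.le⟩ ⟨hc, hcj⟩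

lemma prevCkpt_insert {C : Finset ℕ} {i c j : ℕ} (hiC : ∀ c ∈ C, i < c) (hc : c ∈ C)
    (hcj : c < j) : prevCkpt (insert i C) j = prevCkpt C j := by
  obtain ⟨hmem, hlt⟩ := prevCkpt_mem_lt hc hcj
  refine prevCkpt_eq (Finset.mem_insert_of_mem hmem) hlt fun c' hc' hc'j ↦ ?_
  rcases Finset.mem_insert.mp hc' with rfl | hc'
  · exact (hiC _ hmem).le
  · exact le_prevCkpt hc' hc'j

lemma exists_next_mem {C : Finset ℕ} {i n : ℕ} (hn : n ∈ C) (hin : i < n) :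
    ∃ j ∈ C, i < j ∧ ∀ c ∈ C, c < j → c ≤ i := by
  have hne : (C.filter (i < ·)).Nonempty := ⟨n, Finset.mem_filter.mpr ⟨hn, hin⟩⟩
  obtain ⟨hj, hij⟩ := Finset.mem_filter.mp (Finset.min'_mem _ hne)
  refine ⟨_, hj, hij, fun c hc hcj ↦ not_lt.mp fun hic ↦ hcj.not_ge ?_⟩
  exact Finset.min'_le _ _ (Finset.mem_filter.mpr ⟨hc, hic⟩)

lemma mUsage_of_mem {d : ℕ → ℝ} {C : Finset ℕ} {j : ℕ} (hj : j ∈ C) :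
    mUsage d C j = ∑ c ∈ C.filter (· < j), d c + d j + sfun d (prevCkpt C j) j := by
  have hfilter : C.filter (· ≤ j) = insert j (C.filter (· < j)) := by
    ext c
    simp only [Finset.mem_filter, Finset.mem_insert]
    constructor
    · rintro ⟨hc, hcj⟩
      exact (eq_or_lt_of_le hcj).imp id (⟨hc, ·⟩)
    · rintro (rfl | ⟨hc, hcj⟩)
      exacts [⟨hj, le_rfl⟩, ⟨hc, hcj.le⟩]
  rw [mUsage, sfun, hfilter, Finset.sum_insert (by simp)]
  ring

lemma filter_lt_eq_insert_of_gap {C : Finset ℕ} {i j : ℕ} (hi : i ∈ C) (hij : i < j)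
    (hgap : ∀ c ∈ C, c < j → c ≤ i) : C.filter (· < j) = insert i (C.filter (· < i)) := by
  ext c
  simp only [Finset.mem_filter, Finset.mem_insert]
  constructor
  · rintro ⟨hc, hcj⟩
    exact (eq_or_lt_of_le (hgap c hc hcj)).imp id (⟨hc, ·⟩)
  · rintro (rfl | ⟨hc, hci⟩)
    exacts [⟨hi, hij⟩, ⟨hc, hci.trans hij⟩]

lemma mUsage_insert {d : ℕ → ℝ} {C : Finset ℕ} {i c j : ℕ} (hiC : ∀ c ∈ C, i < c)
    (hc : c ∈ C) (hcj : c < j) (hj : j ∈ C) :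
    mUsage d (insert i C) j = d i + mUsage d C j := by
  have hij : i < j := (hiC c hc).trans hcj
  rw [mUsage_of_mem (Finset.mem_insert_of_mem hj), mUsage_of_mem hj, prevCkpt_insert hiC hc hcj,
    Finset.filter_insert, if_pos hij,
    Finset.sum_insert fun h ↦ (hiC i (Finset.mem_filter.mp h).1).false]
  ring

lemma mUsage_le_peak {d : ℕ → ℝ} {C : Finset ℕ} {i : ℕ} (hi : i ∈ C) (h1i : 1 < i) :
    mUsage d C i ≤ peak d C := by
  refine le_csSup ((C.finite_toSet.image (mUsage d C)).subset ?_).bddAbove ⟨i, hi, h1i, rfl⟩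
  rintro _ ⟨k, hk, -, rfl⟩
  exact ⟨k, hk, rfl⟩

lemma peak_le {d : ℕ → ℝ} {C : Finset ℕ} {b : ℝ} {i : ℕ} (hi : i ∈ C) (h1i : 1 < i)
    (hb : ∀ j ∈ C, 1 < j → mUsage d C j ≤ b) : peak d C ≤ b :=
  csSup_le ⟨_, i, hi, h1i, rfl⟩ fun _ ⟨j, hj, h1j, hy⟩ ↦ hy ▸ hb j hj h1j

theorem dp_add_sum_lt_le_peak {n : ℕ} {d M : ℕ → ℝ} (hd : ∀ k, 1 ≤ k → k ≤ n → 0 < d k)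
    (hMn : M n = d n)
    (hM : ∀ i, 1 ≤ i → i < n →
      M i = sInf {x : ℝ | ∃ j, i < j ∧ j ≤ n ∧ x = max (d i + M j) (d i + sfun d i j + d j)})
    {C : Finset ℕ} (hsub : C ⊆ Finset.Icc 1 n) (h1C : 1 ∈ C) (hnC : n ∈ C) (hn : 1 < n)
    {i : ℕ} (hi : i ∈ C) : M i + ∑ c ∈ C.filter (· < i), d c ≤ peak d C := by
  obtain ⟨h1i, hin⟩ := Finset.mem_Icc.mp (hsub hi)
  have husage {j : ℕ} (hj : j ∈ C) (h1j : 1 < j) :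
      ∑ c ∈ C.filter (· < j), d c + d j + sfun d (prevCkpt C j) j ≤ peak d C :=
    mUsage_of_mem hj ▸ mUsage_le_peak hj h1j
  rcases hin.eq_or_lt with rfl | hin
  · obtain ⟨hmem, hlt⟩ := prevCkpt_mem_lt h1C hn
    have h1 : 1 ≤ prevCkpt C i := (Finset.mem_Icc.mp (hsub hmem)).1
    have hs : 0 ≤ sfun d (prevCkpt C i) i :=
      sfun_nonneg hlt fun k hk hki ↦ (hd k (h1.trans hk) hki.le).le
    linarith [husage hnC hn]
  · obtain ⟨j, hj, hij, hgap⟩ := exists_next_mem hnC hin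
    have hMi : M i ≤ max (d i + M j) (d i + sfun d i j + d j) := by
      rw [hM i h1i hin]
      exact sInf_Ioc_image_le hij (Finset.mem_Icc.mp (hsub hj)).2
    have hsum : ∑ c ∈ C.filter (· < j), d c = d i + ∑ c ∈ C.filter (· < i), d c := by
      rw [filter_lt_eq_insert_of_gap hi hij hgap, Finset.sum_insert (by simp)]
    have hnext := dp_add_sum_lt_le_peak hd hMn hM hsub h1C hnC hn hj
    have hlast := husage hj (h1i.trans_lt hij)
    rw [prevCkpt_eq hi hij hgap] at hlast
    rcases le_max_iff.mp hMi with h | h <;> linarith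
termination_by n - i
decreasing_by omega

theorem exists_checkpoints_mUsage_le_dp {n : ℕ} {d M : ℕ → ℝ}
    (hM : ∀ i, 1 ≤ i → i < n →
      M i = sInf {x : ℝ | ∃ j, i < j ∧ j ≤ n ∧ x = max (d i + M j) (d i + sfun d i j + d j)})
    {i : ℕ} (h1i : 1 ≤ i) (hin : i ≤ n) :
    ∃ C ⊆ Finset.Icc i n, i ∈ C ∧ n ∈ C ∧ ∀ j ∈ C, i < j → mUsage d C j ≤ M i := by
  rcases hin.eq_or_lt with rfl | hin
  · exact ⟨{i}, by simp, Finset.mem_singleton_self i, Finset.mem_singleton_self i,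
      fun j hj hij ↦ absurd (Finset.mem_singleton.mp hj) hij.ne'⟩
  obtain ⟨j, hij, hjn, hMi⟩ :
      ∃ j, i < j ∧ j ≤ n ∧ M i = max (d i + M j) (d i + sfun d i j + d j) := by
    rw [hM i h1i hin]
    exact exists_sInf_Ioc_image_eq hin
  obtain ⟨C, hsub, hjC, hnC, hC⟩ := exists_checkpoints_mUsage_le_dp hM (h1i.trans hij.le) hjn
  have hiC : ∀ c ∈ C, i < c := fun c hc ↦ hij.trans_le (Finset.mem_Icc.mp (hsub hc)).1
  refine ⟨insert i C, Finset.insert_subset (Finset.mem_Icc.mpr ⟨le_rfl, hin.le⟩)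
      (hsub.trans (Finset.Icc_subset_Icc_left hij.le)),
    Finset.mem_insert_self i C, Finset.mem_insert_of_mem hnC, fun k hk hik ↦ ?_⟩
  have hkC : k ∈ C := (Finset.mem_insert.mp hk).resolve_left hik.ne'
  rcases (Finset.mem_Icc.mp (hsub hkC)).1.eq_or_lt with rfl | hjk
  · have hgap : ∀ c ∈ insert i C, c < j → c ≤ i := fun c hc hcj ↦
      (Finset.mem_insert.mp hc).elim le_of_eq fun hc ↦
        absurd (Finset.mem_Icc.mp (hsub hc)).1 hcj.not_ge
    have hfilter : (insert i C).filter (· < i) = ∅ :=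
      Finset.filter_false_of_mem fun c hc ↦
        (Finset.mem_insert.mp hc).elim (fun h ↦ h.not_lt) fun hc ↦ (hiC c hc).not_gt
    rw [mUsage_of_mem hk, prevCkpt_eq (Finset.mem_insert_self i C) hij hgap,
      filter_lt_eq_insert_of_gap (Finset.mem_insert_self i C) hij hgap, hfilter,
      Finset.insert_empty, Finset.sum_singleton, hMi]
    linarith [le_max_right (d i + M j) (d i + sfun d i j + d j)]
  · rw [mUsage_insert hiC hjC hjk hkC, hMi]
    linarith [hC k hkC hjk, le_max_left (d i + M j) (d i + sfun d i j + d j)]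
termination_by n - i
decreasing_by omega

/-- The dynamic checkpoint selection problem: the value `M(1)` of the
dynamic-programming recursion `M(n) = d_n`,
`M(i) = min_{i < j ≤ n} max(d_i + M(j), d_i + s(i,j) + d_j)` for `1 ≤ i < n`,
equals the minimum peak memory over all checkpoint sets `C ⊆ {1,…,n}` with
`1 ∈ C` and `n ∈ C`. -/
theorem dynamic_checkpoint_selection_correct (n : ℕ) (hn : 2 ≤ n)
    (d : ℕ → ℝ) (hd : ∀ k, 1 ≤ k → k ≤ n → 0 < d k)
    (M : ℕ → ℝ) (hMn : M n = d n)
    (hM : ∀ i, 1 ≤ i → i < n →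
      M i = sInf {x : ℝ | ∃ j, i < j ∧ j ≤ n ∧
        x = max (d i + M j) (d i + sfun d i j + d j)}) :
    M 1 = sInf {x : ℝ | ∃ C : Finset ℕ, C ⊆ Finset.Icc 1 n ∧ 1 ∈ C ∧ n ∈ C ∧
      x = peak d C} := by
  have hle {C : Finset ℕ} (hsub : C ⊆ Finset.Icc 1 n) (h1C : 1 ∈ C) (hnC : n ∈ C) :
      M 1 ≤ peak d C := by
    have hempty : C.filter (· < 1) = ∅ :=
      Finset.filter_false_of_mem fun c hc ↦ (Finset.mem_Icc.mp (hsub hc)).1.not_gt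
    simpa only [hempty, Finset.sum_empty, add_zero] using
      dp_add_sum_lt_le_peak hd hMn hM hsub h1C hnC hn h1C
  obtain ⟨C, hsub, h1C, hnC, hC⟩ := exists_checkpoints_mUsage_le_dp hM le_rfl (by omega : 1 ≤ n)
  have hpeak : peak d C ≤ M 1 := peak_le hnC hn hC
  refine (IsLeast.csInf_eq ⟨?_, ?_⟩).symm
  · exact ⟨C, hsub, h1C, hnC, (hle hsub h1C hnC).antisymm hpeak⟩
  rintro _ ⟨C', hsub', h1C', hnC', rfl⟩
  exact hle hsub' h1C' hnC'
end

section
/- Let d_0, d_1, …, d_n be positive reals and s ≥ 0. For −1 ≤ i ≤ n define M(i,s) as follows: M(−1,s) = 0, and for 0 ≤ i ≤ n, M(i,s) is the minimum of Σ_{j ∈ C} d_j over all sets C ⊆ {0,…,i} with 0 ∈ C such that every maximal block of consecutive indices in {1,…,i} \ C has d-sum at most s (this minimum exists since C = {0,…,i} is always feasible). Then M(0,s) = d_0, and for every 1 ≤ i ≤ n, M(i,s) = min_{l(i) ≤ j ≤ i} ( d_j + M(j−1, s) ), where l(i) is the least j with 0 ≤ j ≤ i and Σ_{k=j+1}^{i}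 d_k ≤ s. -/
/-- Every maximal block of consecutive indices in `{1,…,i} \ C` (a segment,
including the trailing block) has `d`-sum at most `s`: a block `[a,b]` with
`1 ≤ a ≤ b ≤ i` disjoint from `C` is maximal when `a = 1` or `a−1 ∈ C`, and
`b = i` or `b+1 ∈ C`. -/
def SegFeasible (d : ℕ → ℝ) (s : ℝ) (i : ℕ) (C : Finset ℕ) : Prop :=
  ∀ a b : ℕ, 1 ≤ a → a ≤ b → b ≤ i →
    (∀ k, a ≤ k → k ≤ b → k ∉ C) →
    (a = 1 ∨ a - 1 ∈ C) → (b = i ∨ b + 1 ∈ C) →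
    ∑ k ∈ Finset.Icc a b, d k ≤ s

/-- `Mck d s (i+1) = M(i,s)`: the minimum of `Σ_{j ∈ C} d_j` over sets
`C ⊆ {0,…,i}` with `0 ∈ C` whose every segment has `d`-sum at most `s`
(the minimum exists since `C = {0,…,i}` is feasible); and `Mck d s 0 = M(−1,s) = 0`. -/
noncomputable def Mck (d : ℕ → ℝ) (s : ℝ) : ℕ → ℝ
  | 0 => 0
  | (i + 1) => sInf {x : ℝ | ∃ C : Finset ℕ, C ⊆ Finset.range (i + 1) ∧ 0 ∈ C ∧
      SegFeasible d s i C ∧ x = ∑ j ∈ C, d j}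

/-!
Splitting an admissible checkpoint set `C` for the prefix `d_0, …, d_i` at its largest element
`j` gives a checkpoint `j`, a trailing segment `d_{j+1}, …, d_i` of sum at most `s`, and an
admissible set for the prefix `d_0, …, d_{j-1}`; conversely any such triple glues back to an
admissible set for `d_0, …, d_i`. Since there are only finitely many admissible sets, the minima
exist, and this decomposition is exactly the recursion. The window `l(i) ≤ j ≤ i` describes the
admissible `j` because the tail sums `Σ_{k=j+1}^{i} d_k` decrease in `j` when `d ≥ 0`.
-/

open Finset

variable {d : ℕ → ℝ} {s : ℝ}

def IsCheckpointSet (d : ℕ → ℝ) (s : ℝ) (i : ℕ) (C : Finset ℕ) : Prop :=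
  C ⊆ range (i + 1) ∧ 0 ∈ C ∧ SegFeasible d s i C

theorem segFeasible_zero (C : Finset ℕ) : SegFeasible d s 0 C := by
  intro a b ha hab hb
  exact absurd hb (by omega)

namespace SegFeasible

theorem of_insert {C : Finset ℕ} {i j : ℕ} (hfeas : SegFeasible d s i (insert j C))
    (hji : j ≤ i) : SegFeasible d s (j - 1) C := by
  intro a b ha hab hbj hgap hleft hright
  refine hfeas a b ha hab (by omega) (fun k hka hkb => ?_) ?_ ?_
  · simpa [show k ≠ j by omega] using hgap k hka hkb
  · exact hleft.imp_right (mem_insert_of_mem ·)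
  · rcases hright with h | h
    · exact .inr (mem_insert.mpr (.inl (by omega)))
    · exact .inr (mem_insert_of_mem h)

theorem insert {C : Finset ℕ} {i j : ℕ} (hC : C ⊆ range j) (hfeas : SegFeasible d s (j - 1) C)
    (hji : j ≤ i) (hsum : ∑ k ∈ Ioc j i, d k ≤ s) : SegFeasible d s i (insert j C) := by
  have hlt : ∀ k ∈ C, k < j := fun k hk => mem_range.mp (hC hk)
  intro a b ha hab hbi hgap hleft hright
  simp only [mem_insert] at hgap hleft hright
  rcases lt_or_gt_of_ne (fun h : j = a => hgap a le_rfl hab (.inl h.symm)) with hja | haj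
  · have ha : a = j + 1 := by
      rcases hleft with h | h | h
      · omega
      · omega
      · exact absurd (hlt _ h) (by omega)
    have hb : b = i := by
      rcases hright with h | h | h
      · exact h
      · omega
      · exact absurd (hlt _ h) (by omega)
    subst ha hb
    rwa [Icc_add_one_left_eq_Ioc]
  · have hbj : b < j := by
      by_contra! h
      exact hgap j (by omega) h (.inl rfl)
    refine hfeas a b ha hab (by omega) (fun k hka hkb hk => hgap k hka hkb (.inr hk)) ?_ ?_
    · exact hleft.imp_right (·.resolve_left (by omega))
    · rcases hright with h | h | h
      · omega
      · exact .inl (by omega)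
      · exact .inr h

theorem sum_Ioc_le_of_max {C : Finset ℕ} {i j : ℕ} (hfeas : SegFeasible d s i C)
    (hs : 0 ≤ s) (hjC : j ∈ C) (hmax : ∀ k ∈ C, k ≤ j) (hji : j ≤ i) :
    ∑ k ∈ Ioc j i, d k ≤ s := by
  rcases hji.eq_or_lt with rfl | hlt
  · simpa using hs
  · rw [← Icc_add_one_left_eq_Ioc]
    exact hfeas (j + 1) i (by omega) hlt le_rfl
      (fun k hk _ hkC => absurd (hmax k hkC) (by omega)) (.inr (by simpa using hjC)) (.inl rfl)

end SegFeasible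

theorem isCheckpointSet_range (d : ℕ → ℝ) (s : ℝ) (i : ℕ) :
    IsCheckpointSet d s i (range (i + 1)) := by
  refine ⟨subset_rfl, mem_range.mpr i.succ_pos, ?_⟩
  intro a b ha hab hbi hgap
  exact absurd (mem_range.mpr (by omega)) (hgap a le_rfl hab)

theorem finite_setOf_isCheckpointSet (d : ℕ → ℝ) (s : ℝ) (i : ℕ) :
    {C | IsCheckpointSet d s i C}.Finite :=
  (range (i + 1)).powerset.finite_toSet.subset fun _ hC => mem_powerset.mpr hC.1

theorem mck_succ_eq_sInf_image (d : ℕ → ℝ) (s : ℝ) (i : ℕ) :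
    Mck d s (i + 1) = sInf ((fun C => ∑ j ∈ C, d j) '' {C | IsCheckpointSet d s i C}) := by
  rw [Mck]
  congr 1
  ext x
  simp [IsCheckpointSet, eq_comm, and_assoc]

theorem mck_succ_le_sum {i : ℕ} {C : Finset ℕ} (hC : IsCheckpointSet d s i C) :
    Mck d s (i + 1) ≤ ∑ j ∈ C, d j := by
  rw [mck_succ_eq_sInf_image]
  exact csInf_le ((finite_setOf_isCheckpointSet d s i).image _).bddBelow ⟨C, hC, rfl⟩

theorem exists_isCheckpointSet_sum_eq_mck_succ (d : ℕ → ℝ) (s : ℝ) (i : ℕ) :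
    ∃ C, IsCheckpointSet d s i C ∧ ∑ j ∈ C, d j = Mck d s (i + 1) := by
  rw [mck_succ_eq_sInf_image]
  exact (Set.image_nonempty.mpr ⟨range (i + 1), isCheckpointSet_range d s i⟩).csInf_mem
    ((finite_setOf_isCheckpointSet d s i).image _)

theorem mck_succ_le_add_mck {i j : ℕ} (hji : j ≤ i) (hsum : ∑ k ∈ Ioc j i, d k ≤ s) :
    Mck d s (i + 1) ≤ d j + Mck d s j := by
  cases j with
  | zero =>
    have hfeas := (segFeasible_zero ∅).insert (empty_subset _) hji hsum
    simpa [Mck] using mck_succ_le_sum (C := {0}) ⟨by simp, mem_singleton_self 0, hfeas⟩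
  | succ m =>
    obtain ⟨C, ⟨hC, h0, hfeas⟩, hsumC⟩ := exists_isCheckpointSet_sum_eq_mck_succ d s m
    have hsub : insert (m + 1) C ⊆ range (i + 1) :=
      insert_subset (mem_range.mpr (by omega)) (hC.trans (range_subset_range.mpr (by omega)))
    calc Mck d s (i + 1) ≤ ∑ k ∈ insert (m + 1) C, d k :=
          mck_succ_le_sum ⟨hsub, mem_insert_of_mem h0, hfeas.insert hC hji hsum⟩
      _ = d (m + 1) + Mck d s (m + 1) := by
          rw [sum_insert fun h => by simpa using hC h, hsumC]

theorem exists_add_mck_le_sum (hs : 0 ≤ s) {i : ℕ} {C : Finset ℕ}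
    (hC : IsCheckpointSet d s i C) :
    ∃ j ≤ i, ∑ k ∈ Ioc j i, d k ≤ s ∧ d j + Mck d s j ≤ ∑ k ∈ C, d k := by
  obtain ⟨hsub, h0, hfeas⟩ := hC
  obtain ⟨j, hjC, hmax⟩ : ∃ j ∈ C, ∀ k ∈ C, k ≤ j :=
    ⟨C.max' ⟨0, h0⟩, C.max'_mem _, C.le_max'⟩
  have hji : j ≤ i := Nat.lt_succ_iff.mp (mem_range.mp (hsub hjC))
  refine ⟨j, hji, hfeas.sum_Ioc_le_of_max hs hjC hmax hji, ?_⟩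
  rw [← add_sum_erase C d hjC]
  gcongr
  cases j with
  | zero =>
    have hempty : C.erase 0 = ∅ := eq_empty_of_forall_notMem fun k hk =>
      ne_of_mem_erase hk (Nat.le_zero.mp (hmax k (mem_of_mem_erase hk)))
    simp [Mck, hempty]
  | succ m =>
    have hrest : SegFeasible d s m (C.erase (m + 1)) :=
      SegFeasible.of_insert (by rwa [insert_erase hjC]) hji
    refine mck_succ_le_sum ⟨fun k hk => ?_, mem_erase.mpr ⟨by omega, h0⟩, hrest⟩
    have := hmax k (mem_of_mem_erase hk)
    exact mem_range.mpr (lt_of_le_of_ne this (ne_of_mem_erase hk))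

theorem mck_succ_eq_sInf (hs : 0 ≤ s) (i : ℕ) :
    Mck d s (i + 1) =
      sInf {x | ∃ j, j ≤ i ∧ ∑ k ∈ Ioc j i, d k ≤ s ∧ x = d j + Mck d s j} := by
  set T := {x | ∃ j, j ≤ i ∧ ∑ k ∈ Ioc j i, d k ≤ s ∧ x = d j + Mck d s j}
  have hT : BddBelow T := (((Set.finite_Iic i).image fun j => d j + Mck d s j).subset
    (by rintro _ ⟨j, hji, -, rfl⟩; exact ⟨j, hji, rfl⟩)).bddBelow
  apply le_antisymm
  · refine le_csInf ⟨_, i, le_rfl, by simpa using hs, rfl⟩ ?_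
    rintro _ ⟨j, hji, hsum, rfl⟩
    exact mck_succ_le_add_mck hji hsum
  · obtain ⟨C, hC, hsumC⟩ := exists_isCheckpointSet_sum_eq_mck_succ d s i
    obtain ⟨j, hji, hsum, hle⟩ := exists_add_mck_le_sum hs hC
    calc sInf T ≤ d j + Mck d s j := csInf_le hT ⟨j, hji, hsum, rfl⟩
      _ ≤ Mck d s (i + 1) := hsumC ▸ hle

theorem sInf_le_and_le_iff_sum_Ioc_le {i j : ℕ} (hd : ∀ k ≤ i, 0 ≤ d k) (hs : 0 ≤ s) :
    sInf {j' | j' ≤ i ∧ ∑ k ∈ Ioc j' i, d k ≤ s} ≤ j ∧ j ≤ i ↔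
      j ≤ i ∧ ∑ k ∈ Ioc j i, d k ≤ s := by
  refine ⟨fun ⟨hlj, hji⟩ => ⟨hji, ?_⟩, fun h => ⟨Nat.sInf_le h, h.1⟩⟩
  have hl := Nat.sInf_mem (s := {j' | j' ≤ i ∧ ∑ k ∈ Ioc j' i, d k ≤ s})
    ⟨i, le_rfl, by simpa using hs⟩
  calc ∑ k ∈ Ioc j i, d k ≤ ∑ k ∈ Ioc (sInf _) i, d k :=
        sum_le_sum_of_subset_of_nonneg (Ioc_subset_Ioc_left hlj) fun k hk _ =>
          hd k (mem_Ioc.mp hk).2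
    _ ≤ s := hl.2

/-- The dynamic-programming recursion (Equation (10)) for the checkpoint
selection problem: `M(0,s) = d_0`, and for `1 ≤ i ≤ n`,
`M(i,s) = min_{l(i) ≤ j ≤ i} (d_j + M(j−1,s))`, where `l(i)` is the least
`j ≤ i` with `Σ_{k=j+1}^{i} d_k ≤ s`. -/
theorem checkpoint_selection_recursion (n : ℕ) (d : ℕ → ℝ)
    (hd : ∀ k ≤ n, 0 < d k) (s : ℝ) (hs : 0 ≤ s) :
    Mck d s 1 = d 0 ∧
    ∀ i, 1 ≤ i → i ≤ n →
      Mck d s (i + 1) =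
        sInf {x : ℝ | ∃ j,
          sInf {j' : ℕ | j' ≤ i ∧ ∑ k ∈ Finset.Ioc j' i, d k ≤ s} ≤ j ∧
          j ≤ i ∧ x = d j + Mck d s j} := by
  refine ⟨?_, fun i _ hin => ?_⟩
  · have hbase :
        {x | ∃ j, j ≤ 0 ∧ ∑ k ∈ Ioc j 0, d k ≤ s ∧ x = d j + Mck d s j} = {d 0} := by
      ext x
      simp [Mck, hs]
    rw [mck_succ_eq_sInf hs, hbase, csInf_singleton]
  · rw [mck_succ_eq_sInf hs]
    congr 1
    have hdi : ∀ k ≤ i, 0 ≤ d k := fun k hk => (hd k (hk.trans hin)).le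
    refine Set.ext fun x => exists_congr fun j => ?_
    simp only [← and_assoc, sInf_le_and_le_iff_sum_Ioc_le hdi hs]
end

section
/- Let d_0, d_1, …, d_n be positive reals (n ≥ 1). For a checkpoint set C ⊆ {0,…,n} with 0 ∈ C and n ∈ C, define cost(C) = Σ_{i ∈ C} d_i + max over segments of C of the segment's d-sum (where the maximum is 0 if every segment is empty). For s ≥ 0 let c(s) be the minimum of Σ_{i ∈ C} d_i over checkpoint sets C whose every segment has d-sum at most s. Then min over all checkpoint sets C of cost(C) equals min over s ∈ S of ( s + c(s) ), where S = {0} ∪ { Σ_{k=a}^{b} d_k : 1 ≤ a ≤ b ≤ n−1 } is the set of d-sums of contiguous index ranges inside {1,…,n−1} together with 0. -/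
/-- `C` is a checkpoint set for the chain `d_0, …, d_n`. -/
def IsCkptSet (n : ℕ) (C : Finset ℕ) : Prop :=
  C ⊆ Finset.range (n + 1) ∧ 0 ∈ C ∧ n ∈ C

/-- `h` and `i` are consecutive checkpoints of `C`. -/
def ConsecPair (C : Finset ℕ) (h i : ℕ) : Prop :=
  h ∈ C ∧ i ∈ C ∧ h < i ∧ ∀ c ∈ C, c ≤ h ∨ i ≤ c

/-- The maximum `d`-sum of a segment of `C` (a maximal block of consecutive
non-checkpoint indices, i.e. the indices strictly between two consecutive
checkpoints); it is `0` when every segment is empty. -/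
noncomputable def maxSegSum (d : ℕ → ℝ) (C : Finset ℕ) : ℝ :=
  sSup {x : ℝ | ∃ h i, ConsecPair C h i ∧ x = ∑ k ∈ Finset.Ioo h i, d k}

/-- The cost of a checkpoint set (Equation (9)): checkpoint memory plus the
maximum segment `d`-sum. -/
noncomputable def cost (d : ℕ → ℝ) (C : Finset ℕ) : ℝ :=
  (∑ i ∈ C, d i) + maxSegSum d C

/-- `c(s)`: the minimum checkpoint memory over checkpoint sets all of whose
segments have `d`-sum at most `s`. -/
noncomputable def cBudget (d : ℕ → ℝ) (n : ℕ) (s : ℝ) : ℝ :=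
  sInf {x : ℝ | ∃ C : Finset ℕ, IsCkptSet n C ∧
    (∀ h i, ConsecPair C h i → ∑ k ∈ Finset.Ioo h i, d k ≤ s) ∧
    x = ∑ j ∈ C, d j}

def segSet (d : ℕ → ℝ) (C : Finset ℕ) : Set ℝ :=
  {x : ℝ | ∃ h i, ConsecPair C h i ∧ x = ∑ k ∈ Finset.Ioo h i, d k}

lemma segSet_finite (d : ℕ → ℝ) (C : Finset ℕ) : (segSet d C).Finite := by
  have hs : segSet d C ⊆ (fun p : ℕ × ℕ => ∑ k ∈ Finset.Ioo p.1 p.2, d k) ''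
      ((C ×ˢ C : Finset (ℕ × ℕ)) : Set (ℕ × ℕ)) := by
    rintro x ⟨h, i, ⟨hh, hi, _, _⟩, rfl⟩
    exact ⟨(h, i), by simp [Finset.mem_product, hh, hi], rfl⟩
  exact ((C ×ˢ C).finite_toSet.image _).subset hs

lemma consec_next (C : Finset ℕ) {h : ℕ} (hh : h ∈ C) (hex : ∃ c ∈ C, h < c) :
    ∃ i, ConsecPair C h i := by
  classical
  set T := C.filter (fun c => h < c) with hT
  have hTne : T.Nonempty := by
    obtain ⟨c, hc, hlt⟩ := hex; exact ⟨c, by simp [hT, hc, hlt]⟩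
  refine ⟨T.min' hTne, hh, ?_, ?_, ?_⟩
  · have := T.min'_mem hTne; simp only [hT, Finset.mem_filter] at this; exact this.1
  · have := T.min'_mem hTne; simp only [hT, Finset.mem_filter] at this; exact this.2
  · intro c hc
    by_cases hch : c ≤ h
    · exact Or.inl hch
    · exact Or.inr (T.min'_le c (by simp only [hT, Finset.mem_filter]; exact ⟨hc, by omega⟩))

lemma segSet_nonempty {n : ℕ} (hn : 1 ≤ n) (d : ℕ → ℝ) {C : Finset ℕ}
    (hC : IsCkptSet n C) : (segSet d C).Nonempty := by
  obtain ⟨i, hi⟩ := consec_next C hC.2.1 ⟨n, hC.2.2, hn⟩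
  exact ⟨_, 0, i, hi, rfl⟩

lemma segSum_nonneg {n : ℕ} (d : ℕ → ℝ) (hd : ∀ k ≤ n, 0 < d k) {C : Finset ℕ}
    (hC : IsCkptSet n C) {x : ℝ} (hx : x ∈ segSet d C) : 0 ≤ x := by
  obtain ⟨h, i, ⟨_, hi, _, _⟩, rfl⟩ := hx
  have hin : i ≤ n := by have := hC.1 hi; simp [Finset.mem_range] at this; omega
  exact Finset.sum_nonneg fun k hk => by
    have := Finset.mem_Ioo.mp hk
    exact (hd k (by omega)).le

lemma maxSegSum_mem {n : ℕ} (hn : 1 ≤ n) (d : ℕ → ℝ) {C : Finset ℕ}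
    (hC : IsCkptSet n C) : maxSegSum d C ∈ segSet d C :=
  (segSet_nonempty hn d hC).csSup_mem (segSet_finite d C)

lemma le_maxSegSum (d : ℕ → ℝ) {C : Finset ℕ} {x : ℝ} (hx : x ∈ segSet d C) :
    x ≤ maxSegSum d C :=
  le_csSup (segSet_finite d C).bddAbove hx

lemma sum_ckpt_nonneg {n : ℕ} (d : ℕ → ℝ) (hd : ∀ k ≤ n, 0 < d k) {C : Finset ℕ}
    (hC : C ⊆ Finset.range (n + 1)) : 0 ≤ ∑ j ∈ C, d j :=
  Finset.sum_nonneg fun j hj => by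
    have := Finset.mem_range.mp (hC hj); exact (hd j (by omega)).le

def budSet (d : ℕ → ℝ) (n : ℕ) (s : ℝ) : Set ℝ :=
  {x : ℝ | ∃ C : Finset ℕ, IsCkptSet n C ∧
    (∀ h i, ConsecPair C h i → ∑ k ∈ Finset.Ioo h i, d k ≤ s) ∧
    x = ∑ j ∈ C, d j}

lemma budSet_finite (d : ℕ → ℝ) (n : ℕ) (s : ℝ) : (budSet d n s).Finite := by
  have hs : budSet d n s ⊆ (fun C : Finset ℕ => ∑ j ∈ C, d j) ''
      ((Finset.range (n + 1)).powerset : Finset (Finset ℕ)) := by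
    rintro x ⟨C, hC, _, rfl⟩
    exact ⟨C, Finset.mem_coe.mpr (Finset.mem_powerset.mpr hC.1), rfl⟩
  exact (((Finset.range (n + 1)).powerset).finite_toSet.image _).subset hs

lemma budSet_nonempty (d : ℕ → ℝ) (n : ℕ) {s : ℝ} (hs : 0 ≤ s) :
    (budSet d n s).Nonempty := by
  refine ⟨_, Finset.range (n + 1), ⟨Finset.Subset.refl _, ?_, ?_⟩, ?_, rfl⟩
  · simp
  · simp
  · rintro h i ⟨hh, hi, hlt, hsep⟩
    have hhn : h < n + 1 := Finset.mem_range.mp hh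
    have hin : i < n + 1 := Finset.mem_range.mp hi
    have h1 : h + 1 ∈ Finset.range (n + 1) := Finset.mem_range.mpr (by omega)
    have := hsep (h + 1) h1
    have hieq : i = h + 1 := by omega
    have hempty : Finset.Ioo h (h + 1) = ∅ := by ext k; simp
    simp [hieq, hempty, hs]

lemma budSet_lb {n : ℕ} (d : ℕ → ℝ) (hd : ∀ k ≤ n, 0 < d k) (s : ℝ) :
    ∀ x ∈ budSet d n s, (0:ℝ) ≤ x := by
  rintro x ⟨C, hC, _, rfl⟩
  exact sum_ckpt_nonneg d hd hC.1

lemma cBudget_mem {n : ℕ} (d : ℕ → ℝ) {s : ℝ} (hs : 0 ≤ s) :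
    cBudget d n s ∈ budSet d n s :=
  (budSet_nonempty d n hs).csInf_mem (budSet_finite d n s)

lemma cBudget_le {n : ℕ} (d : ℕ → ℝ) (hd : ∀ k ≤ n, 0 < d k) {s x : ℝ}
    (hx : x ∈ budSet d n s) : cBudget d n s ≤ x :=
  csInf_le ⟨0, budSet_lb d hd s⟩ hx

lemma Ioo_eq_Icc (h i : ℕ) : Finset.Ioo h i = Finset.Icc (h + 1) (i - 1) := by
  ext k; simp only [Finset.mem_Ioo, Finset.mem_Icc]; omega

lemma maxSegSum_nonneg {n : ℕ} (hn : 1 ≤ n) (d : ℕ → ℝ) (hd : ∀ k ≤ n, 0 < d k)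
    {C : Finset ℕ} (hC : IsCkptSet n C) : 0 ≤ maxSegSum d C :=
  segSum_nonneg d hd hC (maxSegSum_mem hn d hC)

/-- Only the `O(n²)` contiguous sums (together with `0`) need be considered as
segment-memory budgets: the minimum cost over all checkpoint sets equals
`min_{s ∈ S} (s + c(s))` where
`S = {0} ∪ { Σ_{k=a}^{b} d_k : 1 ≤ a ≤ b ≤ n−1 }`. -/
theorem min_cost_eq_min_over_budgets (n : ℕ) (hn : 1 ≤ n) (d : ℕ → ℝ)
    (hd : ∀ k ≤ n, 0 < d k) :
    sInf {x : ℝ | ∃ C : Finset ℕ, IsCkptSet n C ∧ x = cost d C} =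
    sInf {x : ℝ | ∃ s : ℝ,
      (s = 0 ∨ ∃ a b, 1 ≤ a ∧ a ≤ b ∧ b ≤ n - 1 ∧ s = ∑ k ∈ Finset.Icc a b, d k) ∧
      x = s + cBudget d n s} := by
  have hRange : IsCkptSet n (Finset.range (n + 1)) :=
    ⟨Finset.Subset.refl _, by simp, by simp⟩
  have hAne : ({x : ℝ | ∃ C : Finset ℕ, IsCkptSet n C ∧ x = cost d C}).Nonempty :=
    ⟨_, _, hRange, rfl⟩
  have hBne : ({x : ℝ | ∃ s : ℝ,
      (s = 0 ∨ ∃ a b, 1 ≤ a ∧ a ≤ b ∧ b ≤ n - 1 ∧ s = ∑ k ∈ Finset.Icc a b, d k) ∧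
      x = s + cBudget d n s}).Nonempty :=
    ⟨_, 0, Or.inl rfl, rfl⟩
  have hs_nonneg : ∀ s : ℝ,
      (s = 0 ∨ ∃ a b, 1 ≤ a ∧ a ≤ b ∧ b ≤ n - 1 ∧ s = ∑ k ∈ Finset.Icc a b, d k) →
      0 ≤ s := by
    rintro s (rfl | ⟨a, b, ha, hab, hbn, rfl⟩)
    · exact le_refl 0
    · exact Finset.sum_nonneg fun k hk => by
        have := Finset.mem_Icc.mp hk
        exact (hd k (by omega)).le
  have hAbdd : BddBelow {x : ℝ | ∃ C : Finset ℕ, IsCkptSet n C ∧ x = cost d C} := by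
    refine ⟨0, ?_⟩
    rintro x ⟨C, hC, rfl⟩
    exact add_nonneg (sum_ckpt_nonneg d hd hC.1) (maxSegSum_nonneg hn d hd hC)
  have hBbdd : BddBelow {x : ℝ | ∃ s : ℝ,
      (s = 0 ∨ ∃ a b, 1 ≤ a ∧ a ≤ b ∧ b ≤ n - 1 ∧ s = ∑ k ∈ Finset.Icc a b, d k) ∧
      x = s + cBudget d n s} := by
    refine ⟨0, ?_⟩
    rintro x ⟨s, hsmem, rfl⟩
    have hs0 := hs_nonneg s hsmem
    exact add_nonneg hs0 (budSet_lb d hd s _ (cBudget_mem d hs0))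
  apply le_antisymm
  · refine le_csInf hBne ?_
    rintro x ⟨s, hsmem, rfl⟩
    have hs0 := hs_nonneg s hsmem
    obtain ⟨C, hC, hfeas, hsum⟩ := cBudget_mem (n := n) d hs0
    refine le_trans (csInf_le hAbdd ⟨C, hC, rfl⟩) ?_
    have hmax : maxSegSum d C ≤ s := by
      refine csSup_le (segSet_nonempty hn d hC) ?_
      rintro y ⟨h, i, hp, rfl⟩
      exact hfeas h i hp
    rw [cost, hsum]
    linarith
  · refine le_csInf hAne ?_
    rintro x ⟨C, hC, rfl⟩
    obtain ⟨h, i, hpair, hsEq⟩ := maxSegSum_mem hn d hC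
    have hsmem : maxSegSum d C = 0 ∨ ∃ a b, 1 ≤ a ∧ a ≤ b ∧ b ≤ n - 1 ∧
        maxSegSum d C = ∑ k ∈ Finset.Icc a b, d k := by
      by_cases hEmp : Finset.Ioo h i = ∅
      · left; rw [hsEq, hEmp, Finset.sum_empty]
      · right
        obtain ⟨k, hk⟩ := Finset.nonempty_iff_ne_empty.mpr hEmp
        have hk' := Finset.mem_Ioo.mp hk
        have hin : i ≤ n := by
          have := Finset.mem_range.mp (hC.1 hpair.2.1); omega
        refine ⟨h + 1, i - 1, by omega, by omega, by omega, ?_⟩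
        rw [hsEq, Ioo_eq_Icc]
    have hfeas : ∀ h' i', ConsecPair C h' i' →
        ∑ k ∈ Finset.Ioo h' i', d k ≤ maxSegSum d C :=
      fun h' i' hp => le_maxSegSum d ⟨h', i', hp, rfl⟩
    have hcb : cBudget d n (maxSegSum d C) ≤ ∑ j ∈ C, d j :=
      cBudget_le d hd ⟨C, hC, hfeas, rfl⟩
    refine le_trans (csInf_le hBbdd ⟨maxSegSum d C, hsmem, rfl⟩) ?_
    rw [cost]
    linarith
end

section
/- Let d_0, d_1, …, d_n be positive reals, let M : {1,…,n} → ℝ be any function, and for 0 ≤ i < j ≤ n define s(i,j) = Σ_{k=i+1}^{j-1} d_k + max_{i ≤ k ≤ j-1} d_k and U(i,j) = s(i,j) + d_j. If i < a < b ≤ n and M(a) ≤ M(b), then max( M(a), U(i,a) ) ≤ max( M(b), U(i,b) ). Consequently, the index b can be safely ignored when minimizing j ↦ max( M(j), U(i,j) ) over i < j ≤ n. -/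
/-- `U(i,j) = s(i,j) + d_j`. -/
noncomputable def U (d : ℕ → ℝ) (i j : ℕ) : ℝ := sfun d i j + d j

open Finset

section Segments

variable {d : ℕ → ℝ} {i a b : ℕ}

lemma segSum_add_self (hia : i < a) : segSum d i a + d a = ∑ k ∈ Ioc i a, d k := by
  rw [segSum, ← Ioo_insert_right hia, sum_insert (by simp), add_comm]

lemma segSum_eq_segSum_add_add_segSum (hia : i < a) (hab : a < b) :
    segSum d i b = segSum d i a + d a + segSum d a b := by
  have hsplit : Ioo i b = Ioc i a ∪ Ioo a b := by
    ext k
    simp only [mem_Ioo, mem_Ioc, mem_union]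
    omega
  have hdisj : Disjoint (Ioc i a) (Ioo a b) := by
    rw [disjoint_left]
    intro k hk hk'
    simp only [mem_Ioc, mem_Ioo] at hk hk'
    omega
  rw [segSum_add_self hia, segSum, segSum, hsplit, sum_union hdisj]

lemma segMax_le_segMax (hia : i < a) (hab : a ≤ b) : segMax d i a ≤ segMax d i b := by
  rw [segMax, segMax, dif_pos hia, dif_pos (hia.trans_le hab)]
  exact sup'_mono d (Ico_subset_Ico_right hab) _

lemma U_le_U (hia : i < a) (hab : a < b) (hd : ∀ k ∈ Ioc a b, 0 ≤ d k) :
    U d i a ≤ U d i b := by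
  have hgap : 0 ≤ segSum d a b :=
    sum_nonneg fun k hk => hd k (Ioo_subset_Ioc_self hk)
  have hdb : 0 ≤ d b := hd b (right_mem_Ioc.mpr hab)
  have hmax := segMax_le_segMax (d := d) hia hab.le
  rw [U, U, sfun, sfun, segSum_eq_segSum_add_add_segSum hia hab]
  linarith

end Segments

/-- Core inequality of Lemma 3: if `i < a < b ≤ n` and `M(a) ≤ M(b)`, then
`max(M(a), U(i,a)) ≤ max(M(b), U(i,b))`, so index `b` can be ignored when
minimizing `j ↦ max(M(j), U(i,j))` over `i < j ≤ n`. -/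
theorem dominated_index_ignorable (n : ℕ) (d : ℕ → ℝ) (hd : ∀ k ≤ n, 0 < d k)
    (M : ℕ → ℝ) (i a b : ℕ) (hia : i < a) (hab : a < b) (hbn : b ≤ n)
    (hM : M a ≤ M b) :
    max (M a) (U d i a) ≤ max (M b) (U d i b) := by
  refine max_le_max hM (U_le_U hia hab fun k hk => (hd k ?_).le)
  exact (mem_Ioc.mp hk).2.trans hbn
end

section
/- Let d_0, d_1, …, d_n be positive reals, let M : {1,…,n} → ℝ be any function, and for 0 ≤ i < j ≤ n define s(i,j) = Σ_{k=i+1}^{j-1} d_k + max_{i ≤ k ≤ j-1} d_k and U(i,j) = s(i,j) + d_j. Fix 1 ≤ i < n and define Q_i = { j : i < j ≤ n and for every k with i < k < j, M(k) > M(j) } (the strict running minima of M to the right of i). Then min_{i < j ≤ n} max( M(j), U(i,j) ) = min_{j ∈ Q_i} max( M(j), U(i,j) ). -/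
/-! Every `j ∈ (i, n]` is dominated by a strict running minimum `j' ≤ j` with `M j' ≤ M j`
(walk left to an earlier `k` with `M k ≤ M j` until none exists), and `U d i` is monotone on
`(i, n]` because `d ≥ 0`; so each value `max (M j) (U d i j)` is bounded below by a value
attained on the queue. -/

lemma segSum_add_one (d : ℕ → ℝ) {i j : ℕ} (hij : i < j) :
    segSum d i (j + 1) = segSum d i j + d j := by
  rw [segSum, segSum, Finset.Ioo_add_one_right_eq_Ioc, ← Finset.Ioo_insert_right hij,
    Finset.sum_insert Finset.right_notMem_Ioo, add_comm]

lemma segMax_mono_right (d : ℕ → ℝ) {i j j' : ℕ} (hij' : i < j') (hj'j : j' ≤ j) :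
    segMax d i j' ≤ segMax d i j := by
  rw [segMax, segMax, dif_pos hij', dif_pos (hij'.trans_le hj'j)]
  exact Finset.sup'_mono d (Finset.Ico_subset_Ico_right hj'j) _

lemma U_le_U_add_one (d : ℕ → ℝ) {i j : ℕ} (hij : i < j) (hd : 0 ≤ d (j + 1)) :
    U d i j ≤ U d i (j + 1) := by
  have := segMax_mono_right d hij j.le_succ
  simp only [U, sfun, segSum_add_one d hij]
  linarith

lemma U_monotoneOn (d : ℕ → ℝ) {n : ℕ} (hd : ∀ k ≤ n, 0 ≤ d k) (i : ℕ) :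
    MonotoneOn (U d i) (Set.Ioc i n) :=
  monotoneOn_of_le_succ Set.ordConnected_Ioc fun _ _ hj hj1 =>
    U_le_U_add_one d hj.1 (hd _ hj1.2)

lemma exists_strict_running_min_le {α : Type*} [LinearOrder α] (M : ℕ → α) {i j : ℕ}
    (hij : i < j) :
    ∃ j' ≤ j, i < j' ∧ (∀ k, i < k → k < j' → M j' < M k) ∧ M j' ≤ M j := by
  induction j using Nat.strong_induction_on with
  | _ j ih =>
    by_cases hmin : ∀ k, i < k → k < j → M j < M k
    · exact ⟨j, le_rfl, hij, hmin, le_rfl⟩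
    · push Not at hmin
      obtain ⟨k, hik, hkj, hMk⟩ := hmin
      obtain ⟨j', hj'k, hij', hQ, hMj'⟩ := ih k hkj hik
      exact ⟨j', hj'k.trans hkj.le, hij', hQ, hMj'.trans hMk⟩

theorem min_over_queue_eq_general (n : ℕ) (d : ℕ → ℝ) (hd : ∀ k ≤ n, 0 < d k)
    (M : ℕ → ℝ) (i : ℕ) :
    sInf {x : ℝ | ∃ j, i < j ∧ j ≤ n ∧ x = max (M j) (U d i j)} =
    sInf {x : ℝ | ∃ j, i < j ∧ j ≤ n ∧ (∀ k, i < k → k < j → M j < M k) ∧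
      x = max (M j) (U d i j)} := by
  apply csInf_eq_csInf_of_forall_exists_le
  · rintro _ ⟨j, hij, hjn, rfl⟩
    obtain ⟨j', hj'j, hij', hQ, hM⟩ := exists_strict_running_min_le M hij
    have hU : U d i j' ≤ U d i j :=
      U_monotoneOn d (fun k hk => (hd k hk).le) i ⟨hij', hj'j.trans hjn⟩ ⟨hij, hjn⟩ hj'j
    exact ⟨_, ⟨j', hij', hj'j.trans hjn, hQ, rfl⟩, max_le_max hM hU⟩
  · rintro _ ⟨j, hij, hjn, -, rfl⟩
    exact ⟨_, ⟨j, hij, hjn, rfl⟩, le_rfl⟩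

/-- Equation (27)/Lemma 3: the minimum of `j ↦ max(M(j), U(i,j))` over `i < j ≤ n`
equals its minimum over the strict running minima
`Q_i = { j | i < j ≤ n ∧ ∀ k, i < k < j → M(k) > M(j) }`. -/
theorem min_over_queue_eq (n : ℕ) (d : ℕ → ℝ) (hd : ∀ k ≤ n, 0 < d k)
    (M : ℕ → ℝ) (i : ℕ) (hi : 1 ≤ i) (hin : i < n) :
    sInf {x : ℝ | ∃ j, i < j ∧ j ≤ n ∧ x = max (M j) (U d i j)} =
    sInf {x : ℝ | ∃ j, i < j ∧ j ≤ n ∧ (∀ k, i < k → k < j → M j < M k) ∧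
      x = max (M j) (U d i j)} :=
  min_over_queue_eq_general n d hd M i
end

section
/- Let d_0, d_1, …, d_n be positive reals, let M : {1,…,n} → ℝ be any function, and for 0 ≤ i < j ≤ n define s(i,j) = Σ_{k=i+1}^{j-1} d_k + max_{i ≤ k ≤ j-1} d_k and U(i,j) = s(i,j) + d_j. Fix 2 ≤ i < n, and suppose j* is a minimizer of j ↦ max( M(j), U(i,j) ) over i < j ≤ n. Then for every j with j* < j ≤ n, max( M(j*), U(i−1, j*) ) ≤ max( M(j), U(i−1, j) ). Consequently, the minimum of j ↦ max( M(j), U(i−1,j) ) over i−1 < j ≤ n is attained at some index j ≤ j*. -/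
/-! Both claims rest on one monotonicity fact: writing `U(i,j) = Σ_{k=i+1}^{j} d_k + max_{i ≤ k < j} d_k`,
the value `U(i,j)` can only grow when the interval `(i, j]` is enlarged on either side, since the
`d_k` are nonnegative. Hence for `j > j*` we get `M(j*) ≤ max(M(j), U(i,j)) ≤ max(M(j), U(i−1,j))`
by minimality of `j*`, and `U(i−1,j*) ≤ U(i−1,j)`. So no index beyond `j*` beats `j*` for the
shifted objective, and a minimizer over the finite range `(i−1, j*]` is a global one. -/

lemma segMax_le_segMax_s8 (d : ℕ → ℝ) {i i' j j' : ℕ} (hi : i' ≤ i) (hj : j ≤ j') (hij : i < j) :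
    segMax d i j ≤ segMax d i' j' := by
  rw [segMax, segMax, dif_pos hij, dif_pos (by omega)]
  exact Finset.sup'_mono d (Finset.Ico_subset_Ico hi hj) _

lemma U_eq_sum_Ioc_add_segMax (d : ℕ → ℝ) {i j : ℕ} (hij : i < j) :
    U d i j = ∑ k ∈ Finset.Ioc i j, d k + segMax d i j := by
  rw [U, sfun, segSum, ← Finset.Ioo_insert_right hij, Finset.sum_insert (by simp)]
  ring

lemma U_le_U_s8 (d : ℕ → ℝ) {i i' j j' : ℕ} (hi : i' ≤ i) (hj : j ≤ j') (hij : i < j)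
    (hd : ∀ k ≤ j', 0 ≤ d k) : U d i j ≤ U d i' j' := by
  rw [U_eq_sum_Ioc_add_segMax d hij, U_eq_sum_Ioc_add_segMax d (by omega)]
  gcongr ?_ + ?_
  · exact Finset.sum_le_sum_of_subset_of_nonneg (Finset.Ioc_subset_Ioc hi hj)
      fun k hk _ ↦ hd k (Finset.mem_Ioc.mp hk).2
  · exact segMax_le_segMax_s8 d hi hj hij

lemma exists_le_forall_le_of_forall_lt_le {ι β : Type*} [LinearOrder ι] [LocallyFiniteOrder ι]
    [LinearOrder β] {F : ι → β} {a b c : ι} (hab : a < b) (hbc : b ≤ c)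
    (hF : ∀ j, b < j → j ≤ c → F b ≤ F j) :
    ∃ j, a < j ∧ j ≤ c ∧ j ≤ b ∧ ∀ j', a < j' → j' ≤ c → F j ≤ F j' := by
  obtain ⟨j, hj, hjmin⟩ := (Finset.Ioc a b).exists_min_image F ⟨b, Finset.mem_Ioc.mpr ⟨hab, le_rfl⟩⟩
  rw [Finset.mem_Ioc] at hj
  refine ⟨j, hj.1, hj.2.trans hbc, hj.2, fun j' haj' hj'c ↦ ?_⟩
  rcases le_or_gt j' b with hj'b | hbj'
  · exact hjmin j' (Finset.mem_Ioc.mpr ⟨haj', hj'b⟩)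
  · exact (hjmin b (Finset.mem_Ioc.mpr ⟨hab, le_rfl⟩)).trans (hF j' hbj' hj'c)

theorem minimizer_monotone_general (n : ℕ) (d : ℕ → ℝ) (hd : ∀ k ≤ n, 0 < d k)
    (M : ℕ → ℝ) (i : ℕ)
    (jstar : ℕ) (hj1 : i < jstar) (hj2 : jstar ≤ n)
    (hmin : ∀ j, i < j → j ≤ n →
      max (M jstar) (U d i jstar) ≤ max (M j) (U d i j)) :
    (∀ j, jstar < j → j ≤ n →
      max (M jstar) (U d (i - 1) jstar) ≤ max (M j) (U d (i - 1) j)) ∧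
    ∃ j, i - 1 < j ∧ j ≤ n ∧ j ≤ jstar ∧
      ∀ j', i - 1 < j' → j' ≤ n →
        max (M j) (U d (i - 1) j) ≤ max (M j') (U d (i - 1) j') := by
  have beyond : ∀ j, jstar < j → j ≤ n →
      max (M jstar) (U d (i - 1) jstar) ≤ max (M j) (U d (i - 1) j) := by
    intro j hj hjn
    have hd' : ∀ k ≤ j, 0 ≤ d k := fun k hk ↦ (hd k (hk.trans hjn)).le
    have hUi : U d i j ≤ U d (i - 1) j := U_le_U_s8 d (Nat.sub_le i 1) le_rfl (hj1.trans hj) hd'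
    have hUj : U d (i - 1) jstar ≤ U d (i - 1) j := U_le_U_s8 d le_rfl hj.le (by omega) hd'
    refine max_le ?_ (hUj.trans (le_max_right _ _))
    calc M jstar ≤ max (M jstar) (U d i jstar) := le_max_left _ _
      _ ≤ max (M j) (U d i j) := hmin j (hj1.trans hj) hjn
      _ ≤ max (M j) (U d (i - 1) j) := max_le_max le_rfl hUi
  exact ⟨beyond, exists_le_forall_le_of_forall_lt_le (by omega) hj2 beyond⟩

/-- Lemma 4: if `j*` minimizes `j ↦ max(M(j), U(i,j))` over `i < j ≤ n`, then for
every `j* < j ≤ n` we have `max(M(j*), U(i−1,j*)) ≤ max(M(j), U(i−1,j))`, and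
consequently the minimum of `j ↦ max(M(j), U(i−1,j))` over `i−1 < j ≤ n` is
attained at some index `j ≤ j*`. -/
theorem minimizer_monotone (n : ℕ) (d : ℕ → ℝ) (hd : ∀ k ≤ n, 0 < d k)
    (M : ℕ → ℝ) (i : ℕ) (hi : 2 ≤ i) (hin : i < n)
    (jstar : ℕ) (hj1 : i < jstar) (hj2 : jstar ≤ n)
    (hmin : ∀ j, i < j → j ≤ n →
      max (M jstar) (U d i jstar) ≤ max (M j) (U d i j)) :
    (∀ j, jstar < j → j ≤ n →
      max (M jstar) (U d (i - 1) jstar) ≤ max (M j) (U d (i - 1) j)) ∧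
    ∃ j, i - 1 < j ∧ j ≤ n ∧ j ≤ jstar ∧
      ∀ j', i - 1 < j' → j' ≤ n →
        max (M j) (U d (i - 1) j) ≤ max (M j') (U d (i - 1) j') :=
  minimizer_monotone_general n d hd M i jstar hj1 hj2 hmin
end

section
/- Let n ≥ 1 and let d_0 = d_1 = ⋯ = d_n = 1. Then there exists a checkpoint set C ⊆ {0,…,n} with 0 ∈ C and n ∈ C whose cost Σ_{i ∈ C} d_i + max over segments of C of the segment's d-sum is at most 2√n + 2. -/
/-!
Place a checkpoint at every multiple of `s = max 1 ⌈√n⌉` and at `n`. Consecutive checkpoints are at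
most `s` apart, so every segment has at most `s - 1 ≤ √n` elements, while there are at most
`n / s + 2 ≤ √n + 2` checkpoints.
-/

open Finset

lemma maxSegSum_le {d : ℕ → ℝ} {C : Finset ℕ} {b : ℝ} (hb : 0 ≤ b)
    (hseg : ∀ h i, ConsecPair C h i → ∑ k ∈ Ioo h i, d k ≤ b) : maxSegSum d C ≤ b :=
  Real.sSup_le (by rintro _ ⟨h, i, hp, rfl⟩; exact hseg h i hp) hb

lemma ConsecPair.le_add_of_exists_next {C : Finset ℕ} {m s h i : ℕ}
    (hnext : ∀ c ∈ C, c < m → ∃ c' ∈ C, c < c' ∧ c' ≤ c + s)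
    (hp : ConsecPair C h i) (him : i ≤ m) : i ≤ h + s := by
  obtain ⟨hh, -, hhi, hbetween⟩ := hp
  obtain ⟨c', hc', hhc', hc's⟩ := hnext h hh (hhi.trans_le him)
  rcases hbetween c' hc' with hle | hle <;> omega

def gridCheckpoints (n s : ℕ) : Finset ℕ :=
  insert n ((range (n / s + 1)).image (· * s))

section gridCheckpoints

variable {n s : ℕ}

lemma mul_mem_gridCheckpoints {k : ℕ} (hs : 0 < s) (hk : k * s ≤ n) :
    k * s ∈ gridCheckpoints n s :=
  mem_insert_of_mem <| mem_image_of_mem _ <|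
    mem_range_succ_iff.2 ((Nat.le_div_iff_mul_le hs).2 hk)

lemma zero_mem_gridCheckpoints : 0 ∈ gridCheckpoints n s :=
  mem_insert_of_mem <| mem_image.2 ⟨0, by simp, zero_mul s⟩

lemma self_mem_gridCheckpoints : n ∈ gridCheckpoints n s :=
  mem_insert_self _ _

lemma gridCheckpoints_subset_range : gridCheckpoints n s ⊆ range (n + 1) := by
  intro c hc
  rw [mem_range_succ_iff]
  rcases mem_insert.1 hc with rfl | hc
  · exact le_rfl
  · obtain ⟨k, hk, rfl⟩ := mem_image.1 hc
    exact (Nat.mul_le_mul_right s (mem_range_succ_iff.1 hk)).trans (Nat.div_mul_le_self n s)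

lemma card_gridCheckpoints_le : #(gridCheckpoints n s) ≤ n / s + 2 :=
  (card_insert_le _ _).trans <| Nat.add_le_add_right (card_image_le.trans (card_range _).le) 1

lemma exists_next_mem_gridCheckpoints (hs : 0 < s) :
    ∀ c ∈ gridCheckpoints n s, c < n → ∃ c' ∈ gridCheckpoints n s, c < c' ∧ c' ≤ c + s := by
  intro c hc hcn
  rcases mem_insert.1 hc with rfl | hc
  · exact absurd hcn (lt_irrefl c)
  obtain ⟨k, -, rfl⟩ := mem_image.1 hc
  by_cases hk : (k + 1) * s ≤ n
  · exact ⟨(k + 1) * s, mul_mem_gridCheckpoints hs hk, by nlinarith, by rw [add_mul, one_mul]⟩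
  · exact ⟨n, self_mem_gridCheckpoints, hcn, by rw [add_mul, one_mul] at hk; omega⟩

lemma maxSegSum_one_gridCheckpoints_le (hs : 0 < s) :
    maxSegSum (fun _ => 1) (gridCheckpoints n s) ≤ s - 1 := by
  have hs' : (1 : ℝ) ≤ s := by exact_mod_cast hs
  refine maxSegSum_le (by linarith) fun h i hp => ?_
  have hgap := hp.le_add_of_exists_next (exists_next_mem_gridCheckpoints hs)
    (mem_range_succ_iff.1 (gridCheckpoints_subset_range hp.2.1))
  have hcard : #(Ioo h i) + 1 ≤ s := by rw [Nat.card_Ioo]; omega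
  rw [sum_const, nsmul_one]
  have : ((#(Ioo h i) + 1 : ℕ) : ℝ) ≤ s := by exact_mod_cast hcard
  push_cast at this
  linarith

lemma cost_gridCheckpoints_le (hs : 0 < s) :
    (∑ _ ∈ gridCheckpoints n s, (1 : ℝ)) + maxSegSum (fun _ => 1) (gridCheckpoints n s) ≤
      (n / s : ℕ) + s + 1 := by
  have hcard : (#(gridCheckpoints n s) : ℝ) ≤ (n / s : ℕ) + 2 := by
    exact_mod_cast card_gridCheckpoints_le
  rw [sum_const, nsmul_one]
  linarith [maxSegSum_one_gridCheckpoints_le (n := n) hs]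

end gridCheckpoints

lemma natCast_div_le_sqrt {n s : ℕ} (hs : 0 < s) (hsqrt : √(n : ℝ) ≤ s) :
    ((n / s : ℕ) : ℝ) ≤ √(n : ℝ) := by
  have hdiv : ((n / s : ℕ) : ℝ) * s ≤ n := by exact_mod_cast Nat.div_mul_le_self n s
  have hsq : √(n : ℝ) * √(n : ℝ) = n := Real.mul_self_sqrt n.cast_nonneg
  have hs' : (0 : ℝ) < s := by exact_mod_cast hs
  nlinarith [Real.sqrt_nonneg (n : ℝ), (n / s : ℕ).cast_nonneg (α := ℝ)]

theorem sqrt_upper_bound_general (n : ℕ) :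
    ∃ C : Finset ℕ, C ⊆ Finset.range (n + 1) ∧ 0 ∈ C ∧ n ∈ C ∧
      (∑ i ∈ C, (1 : ℝ)) + maxSegSum (fun _ => (1 : ℝ)) C ≤
        2 * Real.sqrt n + 2 := by
  set s := max 1 ⌈√(n : ℝ)⌉₊
  have hs : 0 < s := lt_max_of_lt_left one_pos
  have hsqrt_le : √(n : ℝ) ≤ s :=
    (Nat.le_ceil _).trans (by exact_mod_cast le_max_right _ _)
  have hs_le : (s : ℝ) ≤ √(n : ℝ) + 1 := by
    rw [Nat.cast_max, Nat.cast_one]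
    exact max_le (by linarith [Real.sqrt_nonneg (n : ℝ)])
      (Nat.ceil_lt_add_one (Real.sqrt_nonneg _)).le
  refine ⟨gridCheckpoints n s, gridCheckpoints_subset_range, zero_mem_gridCheckpoints,
    self_mem_gridCheckpoints, ?_⟩
  linarith [cost_gridCheckpoints_le (n := n) hs, natCast_div_le_sqrt hs hsqrt_le]

/-- Achievability of Chen et al.'s `O(√n)` claim: with unit data sizes
`d_0 = ⋯ = d_n = 1`, there is a checkpoint set `C ⊆ {0,…,n}` with `0 ∈ C` and
`n ∈ C` whose cost (checkpoint memory plus maximum segment sum) is at most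
`2√n + 2`. -/
theorem sqrt_upper_bound (n : ℕ) (hn : 1 ≤ n) :
    ∃ C : Finset ℕ, C ⊆ Finset.range (n + 1) ∧ 0 ∈ C ∧ n ∈ C ∧
      (∑ i ∈ C, (1 : ℝ)) + maxSegSum (fun _ => (1 : ℝ)) C ≤
        2 * Real.sqrt n + 2 :=
  sqrt_upper_bound_general n
end
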